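/- Let 0 < s < 1, m > 0, f ∈ C²_b(ℝ^N), and define H^s_m(f,f)(x) = (−Δ+m²)^s(f²)(x) − 2f(x)(−Δ+m²)^s f(x) via the pointwise singular-integral definition of (−Δ+m²)^s. Then H^s_m(f,f)(x) = −C_{N,s} m^{(N+2s)/2} ∫_{ℝ^N} (f(x)−f(y))² |x−y|^{−(N+2s)/2} K_{(N+2s)/2}(m|x−y|) dy − m^{2s} f(x)² ≤ 0 for all x; in particular the pointwise inequality (−Δ+m²)^s(f²)(x) ≤ 2f(x)(−Δ+m²)^s f(x) holds. -/

import Mathlib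

open MeasureTheory Real Set Filter
open scoped RealInnerProductSpace

/-- The Macdonald function (modified Bessel function of the second kind),
via the Sommerfeld integral representation. -/
noncomputable def besselK (ν z : ℝ) : ℝ :=
  2 ^ (-ν - 1) * z ^ ν * ∫ t in Set.Ioi (0 : ℝ), Real.exp (-(t + z ^ 2 / (4 * t))) * t ^ (-ν - 1)

/-- The normalization constant C_{N,s}. -/
noncomputable def CNs (N : ℕ) (s : ℝ) : ℝ :=
  -(2 ^ (1 + s - (N : ℝ) / 2)) / (π ^ ((N : ℝ) / 2) * Real.Gamma (-s))

/-- `fracRelPVAt N s m f x L` means that `(−Δ+m²)^s f (x) = L`, where the operator is given by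
the pointwise principal-value singular-integral definition
`(−Δ+m²)^s f(x) = C_{N,s} m^{(N+2s)/2} P.V. ∫ (f(x)−f(y)) |x−y|^{−(N+2s)/2}
K_{(N+2s)/2}(m|x−y|) dy + m^{2s} f(x)`. -/
def fracRelPVAt (N : ℕ) (s m : ℝ) (f : EuclideanSpace ℝ (Fin N) → ℝ)
    (x : EuclideanSpace ℝ (Fin N)) (L : ℝ) : Prop :=
  Filter.Tendsto
    (fun ε : ℝ => CNs N s * m ^ (((N : ℝ) + 2 * s) / 2) *
      ∫ y in {y : EuclideanSpace ℝ (Fin N) | ε < dist x y},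
        (f x - f y) * dist x y ^ (-(((N : ℝ) + 2 * s) / 2)) *
          besselK (((N : ℝ) + 2 * s) / 2) (m * dist x y))
    (nhdsWithin 0 (Set.Ioi 0)) (nhds (L - m ^ (2 * s) * f x))

/-
Pointwise, `(f x ^ 2 - f y ^ 2) - 2 f x (f x - f y) = -(f x - f y) ^ 2`, so on every truncated
domain `{y | ε < dist x y}` the two principal-value integrals combine into
`-∫ (f x - f y) ^ 2 k(dist x y)`, while the zero-order terms leave `-m ^ (2s) f x ^ 2`. The kernel
`k(r) = r ^ (-ν) K_ν(m r)`, `ν = (N + 2s) / 2`, is nonnegative and, by the integral representation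
of `K_ν`, at most `Γ(ν) / 2 (m / 2) ^ (-ν) r ^ (-(N + 2s))`. Hence `(f x - f y) ^ 2 k` is
`O(dist ^ (2 - N - 2s))` near `x` (`f` is Lipschitz) and `O(dist ^ (-N - 2s))` at infinity (`f` is
bounded): it is integrable, and dominated convergence lets `ε → 0`. The sign then comes from
`C_{N,s} > 0`.
-/

open scoped NNReal Topology

section BesselK

-- the substitution `u = 1 / t` turns this into Euler's integral for `Γ ν`
lemma integrableOn_exp_neg_div_mul_rpow_and_integral_eq {c ν : ℝ} (hc : 0 < c) (hν : 0 < ν) :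
    IntegrableOn (fun t : ℝ => exp (-(c / t)) * t ^ (-ν - 1)) (Ioi 0) ∧
      ∫ t in Ioi 0, exp (-(c / t)) * t ^ (-ν - 1) = (1 / c) ^ ν * Gamma ν := by
  set g : ℝ → ℝ := fun u => u ^ (ν - 1) * exp (-(c * u))
  have hsubst : EqOn (fun t : ℝ => (|(-1 : ℝ)| * t ^ ((-1 : ℝ) - 1)) • g (t ^ (-1 : ℝ)))
      (fun t => exp (-(c / t)) * t ^ (-ν - 1)) (Ioi 0) := by
    intro t (ht : 0 < t)
    simp only [g, smul_eq_mul, abs_neg, abs_one, one_mul, rpow_neg_one, ← div_eq_mul_inv,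
      inv_rpow ht.le, ← rpow_neg ht.le]
    rw [← mul_assoc, ← rpow_add ht, mul_comm]
    ring_nf
  constructor
  · refine ((integrableOn_Ioi_comp_rpow_iff g (by norm_num)).2 ?_).congr_fun hsubst
      measurableSet_Ioi
    exact (integrableOn_rpow_mul_exp_neg_mul_rpow (p := 1) (s := ν - 1) (by linarith) one_pos
      hc).congr_fun (fun u _ => by simp [g]) measurableSet_Ioi
  · rw [← setIntegral_congr_fun measurableSet_Ioi hsubst, integral_comp_rpow_Ioi g (by norm_num),
      integral_rpow_mul_exp_neg_mul_Ioi hν hc]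

lemma besselK_nonneg (ν : ℝ) {z : ℝ} (hz : 0 ≤ z) : 0 ≤ besselK ν z :=
  mul_nonneg (by positivity) <| setIntegral_nonneg measurableSet_Ioi fun t (ht : 0 < t) => by
    positivity

lemma besselK_le {ν z : ℝ} (hν : 0 < ν) (hz : 0 < z) :
    besselK ν z ≤ Gamma ν / 2 * (z / 2) ^ (-ν) := by
  set w := z / 2 with hw
  have hw0 : 0 < w := by positivity
  obtain ⟨hint, hval⟩ := integrableOn_exp_neg_div_mul_rpow_and_integral_eq (pow_pos hw0 2) hν
  have hmono : ∫ t in Ioi 0, exp (-(t + z ^ 2 / (4 * t))) * t ^ (-ν - 1) ≤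
      ∫ t in Ioi 0, exp (-(w ^ 2 / t)) * t ^ (-ν - 1) := by
    refine integral_mono_of_nonneg ?_ hint ?_
    · filter_upwards [self_mem_ae_restrict measurableSet_Ioi] with t (ht : 0 < t)
      positivity
    · filter_upwards [self_mem_ae_restrict measurableSet_Ioi] with t (ht : 0 < t)
      gcongr
      rw [hw, div_pow, div_div]
      norm_num [ht.le]
  calc besselK ν z ≤ 2 ^ (-ν - 1) * z ^ ν * ((1 / w ^ 2) ^ ν * Gamma ν) := by
        rw [besselK, ← hval]
        gcongr
    _ = Gamma ν / 2 * w ^ (-ν) := by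
        have hw2 : (w ^ 2) ^ ν = w ^ ν * w ^ ν := by rw [sq, mul_rpow hw0.le hw0.le]
        rw [show z = 2 * w by rw [hw]; ring, mul_rpow (by norm_num) hw0.le, one_div,
          inv_rpow (by positivity), hw2, rpow_neg hw0.le, rpow_sub two_pos, rpow_neg two_pos.le,
          rpow_one]
        field_simp

lemma measurable_besselK (ν : ℝ) : Measurable (besselK ν) := by
  have h : StronglyMeasurable (Function.uncurry fun z t : ℝ =>
      exp (-(t + z ^ 2 / (4 * t))) * t ^ (-ν - 1)) :=
    Measurable.stronglyMeasurable (by fun_prop)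
  exact (measurable_const.mul (measurable_id.pow_const ν)).mul h.integral_prod_right'.measurable

noncomputable def besselKernel (ν m r : ℝ) : ℝ := r ^ (-ν) * besselK ν (m * r)

lemma besselKernel_nonneg (ν : ℝ) {m r : ℝ} (hm : 0 ≤ m) (hr : 0 ≤ r) :
    0 ≤ besselKernel ν m r :=
  mul_nonneg (rpow_nonneg hr _) (besselK_nonneg ν (mul_nonneg hm hr))

lemma measurable_besselKernel (ν m : ℝ) : Measurable (besselKernel ν m) :=
  (measurable_id.pow_const _).mul ((measurable_besselK ν).comp (measurable_const.mul measurable_id))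

lemma besselKernel_le {ν m r : ℝ} (hν : 0 < ν) (hm : 0 < m) (hr : 0 < r) :
    besselKernel ν m r ≤ Gamma ν / 2 * (m / 2) ^ (-ν) * r ^ (-(2 * ν)) := by
  calc besselKernel ν m r ≤ r ^ (-ν) * (Gamma ν / 2 * (m * r / 2) ^ (-ν)) :=
        mul_le_mul_of_nonneg_left (besselK_le hν (by positivity)) (by positivity)
    _ = Gamma ν / 2 * (m / 2) ^ (-ν) * r ^ (-(2 * ν)) := by
        rw [mul_div_right_comm, mul_rpow (by positivity) hr.le, two_mul, neg_add,
          rpow_add hr]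
        ring

end BesselK

lemma CNs_pos {N : ℕ} {s : ℝ} (hs0 : 0 < s) (hs1 : s < 1) : 0 < CNs N s := by
  -- `Γ(1 - s) = -s Γ(-s)` with `Γ(1 - s) > 0` forces `Γ(-s) < 0`
  have hΓ : Gamma (-s) < 0 := by
    have h := Gamma_add_one (show -s ≠ 0 by linarith)
    nlinarith [Gamma_pos_of_pos (show 0 < -s + 1 by linarith)]
  exact div_pos_of_neg_of_neg (neg_neg_of_pos (by positivity))
    (mul_neg_of_pos_of_neg (by positivity) hΓ)

lemma tendsto_setIntegral_setOf_lt_dist {X F : Type*} [MetricSpace X] [MeasurableSpace X]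
    [OpensMeasurableSpace X] {μ : Measure X} [NormedAddCommGroup F] [NormedSpace ℝ F] {g : X → F}
    (hg : Integrable g μ) {x : X} (hgx : g x = 0) :
    Tendsto (fun ε => ∫ y in {y | ε < dist x y}, g y ∂μ) (𝓝[>] 0) (𝓝 (∫ y, g y ∂μ)) := by
  have hS : ∀ ε, MeasurableSet {y | ε < dist x y} := fun ε =>
    measurableSet_lt measurable_const (by fun_prop)
  simp_rw [← integral_indicator (hS _)]
  refine tendsto_integral_filter_of_dominated_convergence (fun y => ‖g y‖)
    (Eventually.of_forall fun ε => hg.aestronglyMeasurable.indicator (hS ε))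
    (Eventually.of_forall fun ε => ae_of_all _ fun y => norm_indicator_le_norm_self _ _)
    hg.norm (ae_of_all _ fun y => ?_)
  rcases eq_or_ne y x with rfl | hy
  · exact tendsto_const_nhds.congr' (Eventually.of_forall fun ε => by simp [indicator_apply, hgx])
  · refine tendsto_const_nhds.congr' ?_
    filter_upwards [Ioo_mem_nhdsGT (dist_pos.2 hy.symm)] with ε hε
    exact (indicator_of_mem (show y ∈ {y | ε < dist x y} from hε.2) g).symm

lemma abs_sub_le_two_mul {X : Type*} {g : X → ℝ} {B : ℝ} (hg : ∀ y, |g y| ≤ B) (x y : X) :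
    |g x - g y| ≤ 2 * B :=
  (abs_sub _ _).trans (by linarith [hg x, hg y])

lemma lipschitzWith_of_norm_iteratedFDeriv_one_le {E F : Type*} [NormedAddCommGroup E]
    [NormedSpace ℝ E] [NormedAddCommGroup F] [NormedSpace ℝ F] {f : E → F} {C : ℝ}
    (hf : Differentiable ℝ f) (h : ∀ x, ‖iteratedFDeriv ℝ 1 f x‖ ≤ C) :
    LipschitzWith C.toNNReal f :=
  lipschitzWith_of_nnnorm_fderiv_le hf fun x => by
    rw [← NNReal.coe_le_coe, coe_nnnorm, ← norm_iteratedFDeriv_one]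
    exact (h x).trans (Real.le_coe_toNNReal C)

section Integrability

open Metric Module

variable {E F : Type*} [NormedAddCommGroup E] [NormedSpace ℝ E] [FiniteDimensional ℝ E]
  [MeasurableSpace E] [BorelSpace E] {μ : Measure E} [μ.IsAddHaarMeasure] [NormedAddCommGroup F]

lemma integrableOn_ball_of_norm_le_dist_rpow (hd : 1 ≤ finrank ℝ E) {f : E → F} {x : E}
    {C α r : ℝ} (hα : α < finrank ℝ E) (h_decay : ∀ y, ‖f y‖ ≤ C * dist x y ^ (-α))
    (h_meas : AEStronglyMeasurable f μ) : IntegrableOn f (ball x r) μ := by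
  have hball : (x + ·) ⁻¹' ball x r = ball 0 r := by ext; simp
  rw [← (measurePreserving_add_left μ x).integrableOn_comp_preimage
    (measurableEmbedding_addLeft x), hball]
  refine integrableOn_ball_of_norm_le_rpow (C := C) hd hα (ae_of_all _ fun z => ?_)
    (h_meas.comp_measurePreserving (measurePreserving_add_left μ x))
  simpa only [Function.comp_apply, dist_self_add_right] using h_decay (x + z)

lemma integrableOn_setOf_lt_dist_of_norm_le_rpow {f : E → F} {x : E} {C α ε : ℝ}
    (hα : finrank ℝ E < α) (hε : 0 < ε)
    (h_decay : ∀ y, ε < dist x y → ‖f y‖ ≤ C * dist x y ^ (-α))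
    (h_meas : AEStronglyMeasurable f μ) : IntegrableOn f {y | ε < dist x y} μ := by
  have hS : MeasurableSet {y | ε < dist x y} := measurableSet_lt measurable_const (by fun_prop)
  have hbound : Integrable (fun y => C * (ε / (1 + ε)) ^ (-α) * (1 + ‖y - x‖) ^ (-α)) μ :=
    ((integrable_one_add_norm hα).comp_sub_right x).const_mul _
  refine hbound.integrableOn.mono' h_meas.restrict ((ae_restrict_iff' hS).2 (ae_of_all _ ?_))
  intro y (hy : ε < dist x y)
  have hd : 0 < dist x y := hε.trans hy
  have hα0 : 0 < α := (Nat.cast_nonneg _).trans_lt hα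
  -- split `dist x y = (1 + dist x y) * (dist x y / (1 + dist x y))`; `t ↦ t / (1 + t)` increases
  have hratio : ε / (1 + ε) ≤ dist x y / (1 + dist x y) := by
    rw [div_le_div_iff₀ (by positivity) (by positivity)]
    nlinarith
  have hC : 0 ≤ C := by
    have := (norm_nonneg _).trans (h_decay y hy)
    exact nonneg_of_mul_nonneg_left this (by positivity)
  calc ‖f y‖ ≤ C * dist x y ^ (-α) := h_decay y hy
    _ = C * ((1 + dist x y) ^ (-α) * (dist x y / (1 + dist x y)) ^ (-α)) := by
        rw [← mul_rpow (by positivity) (by positivity), mul_div_cancel₀ _ (by positivity)]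
    _ ≤ C * ((1 + dist x y) ^ (-α) * (ε / (1 + ε)) ^ (-α)) :=
        mul_le_mul_of_nonneg_left (mul_le_mul_of_nonneg_left
          (rpow_le_rpow_of_nonpos (by positivity) hratio (by linarith)) (by positivity)) hC
    _ = C * (ε / (1 + ε)) ^ (-α) * (1 + ‖y - x‖) ^ (-α) := by
        rw [dist_comm, dist_eq_norm]; ring

lemma integrableOn_mul_besselKernel {g : E → ℝ} {x : E} {B ν m ε : ℝ}
    (hν : finrank ℝ E < 2 * ν) (hm : 0 < m) (hε : 0 < ε) (hgB : ∀ y, |g y| ≤ B)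
    (hg : AEStronglyMeasurable g μ) :
    IntegrableOn (fun y => g y * besselKernel ν m (dist x y)) {y | ε < dist x y} μ := by
  have hν0 : 0 < ν := by linarith [(finrank ℝ E).cast_nonneg (α := ℝ)]
  refine integrableOn_setOf_lt_dist_of_norm_le_rpow (C := B * (Gamma ν / 2 * (m / 2) ^ (-ν)))
    hν hε (fun y hy => ?_) (hg.mul ((measurable_besselKernel ν m).comp_aemeasurable
      (by fun_prop : Measurable (dist x)).aemeasurable).aestronglyMeasurable)
  have hd : 0 < dist x y := hε.trans hy
  rw [norm_mul, Real.norm_eq_abs, Real.norm_of_nonneg (besselKernel_nonneg ν hm.le hd.le),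
    mul_assoc]
  exact mul_le_mul (hgB y) (besselKernel_le hν0 hm hd) (besselKernel_nonneg ν hm.le hd.le)
    ((abs_nonneg _).trans (hgB y))

-- `(f x - f y) ^ 2 = O(dist x y ^ 2)` lowers the singularity at `x` to `dist ^ (2 - 2ν)`
lemma integrableOn_ball_sq_sub_mul_besselKernel (hd : 1 ≤ finrank ℝ E) {f : E → ℝ} {L : ℝ≥0}
    (hf : LipschitzWith L f) {x : E} {ν m r : ℝ} (hν0 : 0 < ν)
    (hν : 2 * ν < finrank ℝ E + 2) (hm : 0 < m) :
    IntegrableOn (fun y => (f x - f y) ^ 2 * besselKernel ν m (dist x y)) (ball x r) μ := by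
  set c := Gamma ν / 2 * (m / 2) ^ (-ν)
  have hc : 0 ≤ c := by positivity [Gamma_pos_of_pos hν0]
  refine integrableOn_ball_of_norm_le_dist_rpow (C := L ^ 2 * c) hd (by linarith : 2 * ν - 2 < _)
    (fun y => ?_) (by
      have hfc := hf.continuous
      exact ((by fun_prop : Continuous fun y => (f x - f y) ^ 2).measurable.mul
        ((measurable_besselKernel ν m).comp (by fun_prop))).aestronglyMeasurable)
  rcases eq_or_ne y x with rfl | hy
  · simp only [sub_self, zero_pow two_ne_zero, zero_mul, norm_zero]
    positivity
  have hd : 0 < dist x y := dist_pos.2 hy.symm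
  have hlip : (f x - f y) ^ 2 ≤ (L * dist x y) ^ 2 := by
    rw [← sq_abs, ← Real.dist_eq]
    exact pow_le_pow_left₀ dist_nonneg (hf.dist_le_mul x y) 2
  rw [Real.norm_eq_abs, abs_of_nonneg (mul_nonneg (sq_nonneg _)
    (besselKernel_nonneg ν hm.le hd.le))]
  calc (f x - f y) ^ 2 * besselKernel ν m (dist x y)
      ≤ (L * dist x y) ^ 2 * (c * dist x y ^ (-(2 * ν))) :=
        mul_le_mul hlip (besselKernel_le hν0 hm hd) (besselKernel_nonneg ν hm.le hd.le)
          (sq_nonneg _)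
    _ = L ^ 2 * c * dist x y ^ (-(2 * ν - 2)) := by
        rw [neg_sub, sub_eq_add_neg, rpow_add hd, rpow_two]
        ring

lemma integrable_sq_sub_mul_besselKernel (hd : 1 ≤ finrank ℝ E) {f : E → ℝ} {L : ℝ≥0}
    (hf : LipschitzWith L f) {B : ℝ} (hfB : ∀ y, |f y| ≤ B) (x : E) {ν m : ℝ}
    (hν : finrank ℝ E < 2 * ν) (hν' : 2 * ν < finrank ℝ E + 2) (hm : 0 < m) :
    Integrable (fun y => (f x - f y) ^ 2 * besselKernel ν m (dist x y)) μ := by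
  have hcover : ball x 1 ∪ {y | 1 / 2 < dist x y} = univ := by
    refine eq_univ_of_forall fun y => ?_
    by_cases h : dist x y < 1
    · exact Or.inl (by rwa [mem_ball, dist_comm])
    · exact Or.inr (show (1 : ℝ) / 2 < dist x y by linarith)
  have hsq : ∀ y, |(f x - f y) ^ 2| ≤ (2 * B) ^ 2 := fun y => by
    rw [abs_pow]
    exact pow_le_pow_left₀ (abs_nonneg _) (abs_sub_le_two_mul hfB x y) 2
  rw [← integrableOn_univ, ← hcover]
  exact (integrableOn_ball_sq_sub_mul_besselKernel hd hf
    (by linarith [(finrank ℝ E).cast_nonneg (α := ℝ)]) hν' hm).union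
    (integrableOn_mul_besselKernel hν hm one_half_pos hsq (by
      have hfc := hf.continuous
      exact (by fun_prop : Continuous fun y => (f x - f y) ^ 2).aestronglyMeasurable))

end Integrability

lemma mul_rpow_neg_mul_besselK (a ν m r : ℝ) :
    a * r ^ (-ν) * besselK ν (m * r) = a * besselKernel ν m r :=
  mul_assoc _ _ _

lemma sub_two_mul_eq_of_fracRelPVAt {N : ℕ} {s m : ℝ} {f : EuclideanSpace ℝ (Fin N) → ℝ}
    {x : EuclideanSpace ℝ (Fin N)} {a b : ℝ} (ha : fracRelPVAt N s m f x a)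
    (hb : fracRelPVAt N s m (fun y => f y ^ 2) x b)
    (h₁ : ∀ ε > 0, IntegrableOn (fun y => (f x - f y) *
      besselKernel (((N : ℝ) + 2 * s) / 2) m (dist x y)) {y | ε < dist x y})
    (h₂ : ∀ ε > 0, IntegrableOn (fun y => (f x ^ 2 - f y ^ 2) *
      besselKernel (((N : ℝ) + 2 * s) / 2) m (dist x y)) {y | ε < dist x y})
    (hq : Integrable fun y => (f x - f y) ^ 2 * besselKernel (((N : ℝ) + 2 * s) / 2) m (dist x y)) :
    b - 2 * f x * a = -CNs N s * m ^ (((N : ℝ) + 2 * s) / 2) *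
      (∫ y, (f x - f y) ^ 2 * besselKernel (((N : ℝ) + 2 * s) / 2) m (dist x y)) -
        m ^ (2 * s) * f x ^ 2 := by
  simp only [fracRelPVAt, mul_rpow_neg_mul_besselK] at ha hb
  set ν := ((N : ℝ) + 2 * s) / 2
  set c := CNs N s * m ^ ν
  have hlim := hb.sub (ha.const_mul (2 * f x))
  have hlim' : Tendsto (fun ε => c * (∫ y in {y | ε < dist x y}, (f x ^ 2 - f y ^ 2) *
        besselKernel ν m (dist x y)) -
      2 * f x * (c * ∫ y in {y | ε < dist x y}, (f x - f y) * besselKernel ν m (dist x y)))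
      (𝓝[>] 0) (𝓝 (-c * ∫ y, (f x - f y) ^ 2 * besselKernel ν m (dist x y))) := by
    refine ((tendsto_setIntegral_setOf_lt_dist hq (x := x) (by simp)).const_mul (-c)).congr' ?_
    filter_upwards [self_mem_nhdsWithin] with ε (hε : 0 < ε)
    rw [← integral_const_mul, ← integral_const_mul, ← integral_const_mul, ← integral_const_mul,
      ← integral_sub ((h₂ ε hε).const_mul c) (((h₁ ε hε).const_mul c).const_mul (2 * f x))]
    exact integral_congr_ae (ae_of_all _ fun y => by ring)
  linear_combination tendsto_nhds_unique hlim hlim'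

theorem carre_du_champ_nonpositive (N : ℕ) (hN : 1 ≤ N) (s m : ℝ)
    (hs : s ∈ Set.Ioo (0 : ℝ) 1) (hm : 0 < m)
    (f : EuclideanSpace ℝ (Fin N) → ℝ) (hf : ContDiff ℝ 2 f)
    (hfb : ∀ i : ℕ, i ≤ 2 → ∃ C : ℝ, ∀ x, ‖iteratedFDeriv ℝ i f x‖ ≤ C)
    (Lf Lf2 : EuclideanSpace ℝ (Fin N) → ℝ)
    (hLf : ∀ x, fracRelPVAt N s m f x (Lf x))
    (hLf2 : ∀ x, fracRelPVAt N s m (fun y => (f y) ^ 2) x (Lf2 x)) :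
    ∀ x : EuclideanSpace ℝ (Fin N),
      (Lf2 x - 2 * f x * Lf x =
        -(CNs N s) * m ^ (((N : ℝ) + 2 * s) / 2) *
          (∫ y : EuclideanSpace ℝ (Fin N),
            (f x - f y) ^ 2 * dist x y ^ (-(((N : ℝ) + 2 * s) / 2)) *
              besselK (((N : ℝ) + 2 * s) / 2) (m * dist x y))
          - m ^ (2 * s) * (f x) ^ 2)
      ∧ Lf2 x - 2 * f x * Lf x ≤ 0
      ∧ Lf2 x ≤ 2 * f x * Lf x := by
  intro x
  obtain ⟨hs0, hs1⟩ := hs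
  obtain ⟨C₀, hC₀⟩ := hfb 0 (by norm_num)
  obtain ⟨C₁, hC₁⟩ := hfb 1 (by norm_num)
  have hfB : ∀ y, |f y| ≤ C₀ := fun y => by simpa using hC₀ y
  have hf2B : ∀ y, |f y ^ 2| ≤ C₀ ^ 2 := fun y => by
    rw [abs_pow]; exact pow_le_pow_left₀ (abs_nonneg _) (hfB y) 2
  have hlip := lipschitzWith_of_norm_iteratedFDeriv_one_le (hf.differentiable (by norm_num)) hC₁
  have hfc : Continuous f := hf.continuous
  set ν := ((N : ℝ) + 2 * s) / 2 with hν_def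
  have hd : Module.finrank ℝ (EuclideanSpace ℝ (Fin N)) = N := finrank_euclideanSpace_fin
  have hν : (Module.finrank ℝ (EuclideanSpace ℝ (Fin N)) : ℝ) < 2 * ν := by
    rw [hd, hν_def]; linarith
  have hν' : 2 * ν < Module.finrank ℝ (EuclideanSpace ℝ (Fin N)) + 2 := by
    rw [hd, hν_def]; linarith
  have key := sub_two_mul_eq_of_fracRelPVAt (hLf x) (hLf2 x)
    (fun ε hε => integrableOn_mul_besselKernel hν hm hε (abs_sub_le_two_mul hfB x) (by fun_prop))
    (fun ε hε => integrableOn_mul_besselKernel hν hm hε (abs_sub_le_two_mul hf2B x) (by fun_prop))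
    (integrable_sq_sub_mul_besselKernel (by rwa [hd]) hlip hfB x hν hν' hm)
  simp only [mul_rpow_neg_mul_besselK]
  have hI : 0 ≤ ∫ y, (f x - f y) ^ 2 * besselKernel ν m (dist x y) :=
    integral_nonneg fun y => mul_nonneg (sq_nonneg _) (besselKernel_nonneg ν hm.le dist_nonneg)
  have hcI := mul_nonneg (mul_pos (CNs_pos (N := N) hs0 hs1) (rpow_pos_of_pos hm ν)).le hI
  have hf2 : 0 ≤ m ^ (2 * s) * f x ^ 2 := by positivity
  exact ⟨key, by linarith, by linarith⟩
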